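/- arXiv:2308.06168 — 3 statements merged into one kernel-verified Lean document; each statement's English description precedes it below -/
import Mathlib

section
/- Let (X,Y) and (X',Y') be bivariate random vectors on probability spaces such that Y and Y' have continuous distribution functions. Suppose that for every convex function φ₀ : ℝ → ℝ and every v ∈ (0,1), ∫_ℝ φ₀(F_{Y|X=x}(q_Y(v))) dP^X(x) ≤ ∫_ℝ φ₀(F_{Y'|X'=x'}(q_{Y'}(v))) dP^{X'}(x') whenever both integrals exist (i.e., (Y|X) is smaller than (Y'|X') in the Schur order for conditional distributions). Then for every convex function φ : [−1,1] → ℝ such that the integrals exist, ∫_{ℝ×ℝ} ∫_ℝ φ(F_{Y|X=x₁}(y) − F_{Y|X=x₂}(y)) dP^Y(y) d(P^X ⊗ P^X)(x₁,x₂) ≤ ∫_{ℝ×ℝ} ∫_ℝ φ(F_{Y'|X'=x₁}(y) − F_{Y'|X'=x₂}(y)) dP^{Y'}(y) d(P^{X'} ⊗ P^{X'})(x₁,x₂). -/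
/-!
Substituting `y = q_Y(v)` with `v` uniform on `(0,1)` and applying Fubini, it suffices to compare,
for each fixed `v`, `E φ(G₁ - G₂)` with `E φ(G₁' - G₂')`, where `G₁, G₂` are independent copies of
`F_{Y|X}(q_Y(v))` and similarly for the primed variables; the Schur order says that `G` is below
`G'` in the convex order. For convex `ψ` on `ℝ`, conditioning on `G₂` and applying the convex order
to `t ↦ ψ(t - G₂)`, then to the convex function `c ↦ E ψ(G₁' - c)`, gives that `G₁ - G₂` is below
`G₁' - G₂'` in the convex order. Finally, a convex `φ` on `[-1,1]` is a bounded pointwise limit of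
convex functions on `ℝ`, so dominated convergence passes the inequality to `φ`.
-/

open MeasureTheory ProbabilityTheory Filter Set
open scoped ENNReal Topology

/-- The quantile function (quasi-inverse) `q_ν(v) = inf {z : F_ν(z) ≥ v}` of a
measure `ν` on ℝ. -/
noncomputable def cdfQuantile (ν : MeasureTheory.Measure ℝ) (v : ℝ) : ℝ :=
  sInf {z : ℝ | v ≤ (ν (Set.Iic z)).toReal}

lemma convexOn_univ_affine (c s : ℝ) : ConvexOn ℝ univ fun t => c + s * t :=
  ⟨convex_univ, fun x _ y _ p q _ _ hpq => le_of_eq <| by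
    simp only [smul_eq_mul]; linear_combination (-c) * hpq⟩

lemma convexOn_univ_max_zero_affine (c s : ℝ) : ConvexOn ℝ univ fun t => max 0 (c + s * t) :=
  (convexOn_const 0 convex_univ).sup (convexOn_univ_affine c s)

lemma ConvexOn.comp_affine_univ {ψ : ℝ → ℝ} (hψ : ConvexOn ℝ univ ψ) (c s : ℝ) :
    ConvexOn ℝ univ fun t => ψ (c + s * t) :=
  ⟨convex_univ, fun x _ y _ p q hp hq hpq => by
    have := hψ.2 (mem_univ (c + s * x)) (mem_univ (c + s * y)) hp hq hpq
    simp only [smul_eq_mul] at this ⊢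
    convert this using 2
    linear_combination (-c) * hpq⟩

noncomputable def rightTangent (φ : ℝ → ℝ) (q t : ℝ) : ℝ :=
  φ q + derivWithin φ (Ioi q) q * (t - q)

lemma convexOn_rightTangent (φ : ℝ → ℝ) (q : ℝ) : ConvexOn ℝ univ (rightTangent φ q) :=
  (convexOn_univ_affine (φ q - derivWithin φ (Ioi q) q * q) (derivWithin φ (Ioi q) q)).congr
    fun t _ => by unfold rightTangent; ring

namespace ConvexOn

variable {S : Set ℝ} {φ : ℝ → ℝ} {q t : ℝ}

lemma rightTangent_le (hφ : ConvexOn ℝ S φ) (hq : q ∈ interior S) (ht : t ∈ S) :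
    rightTangent φ q t ≤ φ t := by
  unfold rightTangent
  rcases lt_trichotomy t q with htq | rfl | hqt
  · have hslope := (hφ.slope_le_leftDeriv_of_mem_interior ht hq htq).trans
      (hφ.leftDeriv_le_rightDeriv_of_mem_interior hq)
    rw [slope_def_field, div_le_iff₀ (sub_pos.2 htq)] at hslope
    linarith
  · simp
  · have hslope := hφ.rightDeriv_le_slope_of_mem_interior hq ht hqt
    rw [slope_def_field, le_div_iff₀ (sub_pos.2 hqt)] at hslope
    linarith

lemma tendsto_rightTangent_nhdsLT (hφ : ConvexOn ℝ S φ) (ht : t ∈ interior S) :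
    Tendsto (fun q => rightTangent φ q t) (𝓝[<] t) (𝓝 (φ t)) := by
  have hS : interior S ∈ 𝓝 t := isOpen_interior.mem_nhds ht
  obtain ⟨w, hwt, hw⟩ := (mem_nhdsLT_iff_exists_Ioo_subset.1 (mem_nhdsWithin_of_mem_nhds hS))
  obtain ⟨w', hww', hw't⟩ := exists_between (mem_Iio.1 hwt)
  have hw'S : w' ∈ interior S := hw ⟨hww', hw't⟩
  -- below `t`, the tangents are squeezed between `φ t` and the lines of the fixed slope at `w'`
  have hlower : Tendsto (fun q => φ q + derivWithin φ (Ioi w') w' * (t - q)) (𝓝[<] t)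
      (𝓝 (φ t)) := by
    have hcont : ContinuousAt φ t := (hφ.continuousOn_interior).continuousAt
      (isOpen_interior.mem_nhds ht)
    have : ContinuousAt (fun q => φ q + derivWithin φ (Ioi w') w' * (t - q)) t :=
      hcont.add (by fun_prop)
    simpa using this.tendsto.mono_left nhdsWithin_le_nhds
  refine tendsto_of_tendsto_of_tendsto_of_le_of_le' hlower tendsto_const_nhds ?_ ?_
  · filter_upwards [Ioo_mem_nhdsLT hw't] with q hq
    have hqS : q ∈ interior S := hw ⟨hww'.trans hq.1, hq.2⟩
    unfold rightTangent
    gcongr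
    · exact sub_nonneg.2 hq.2.le
    · exact hφ.monotoneOn_rightDeriv hw'S hqS hq.1.le
  · filter_upwards [mem_nhdsWithin_of_mem_nhds hS] with q hq
    exact hφ.rightTangent_le hq (interior_subset ht)

lemma bddAbove_rightTangent (hφ : ConvexOn ℝ S φ) {u : ℕ → ℝ} (hu : ∀ n, u n ∈ interior S)
    (ht : t ∈ S) : BddAbove (range fun n => rightTangent φ (u n) t) :=
  ⟨φ t, by rintro _ ⟨n, rfl⟩; exact hφ.rightTangent_le (hu n) ht⟩

lemma ciSup_rightTangent (hφ : ConvexOn ℝ S φ) {u : ℕ → ℝ} (hu : ∀ n, u n ∈ interior S)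
    (hdense : interior S ⊆ closure (range u)) (ht : t ∈ interior S) :
    ⨆ n, rightTangent φ (u n) t = φ t := by
  refine le_antisymm (ciSup_le fun n => hφ.rightTangent_le (hu n) (interior_subset ht))
    (le_of_forall_pos_lt_add fun ε hε => ?_)
  have hev : ∀ᶠ q in 𝓝[<] t, φ t - ε < rightTangent φ q t ∧ q ∈ interior S :=
    ((hφ.tendsto_rightTangent_nhdsLT ht).eventually_const_lt (sub_lt_self _ hε)).and
      (mem_nhdsWithin_of_mem_nhds (isOpen_interior.mem_nhds ht))
  obtain ⟨l, hlt, hl⟩ := mem_nhdsLT_iff_exists_Ioo_subset.1 hev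
  obtain ⟨x, hx⟩ := nonempty_Ioo.2 (mem_Iio.1 hlt)
  obtain ⟨_, hq, n, rfl⟩ := mem_closure_iff.1 (hdense (hl hx).2) _ isOpen_Ioo hx
  calc φ t < rightTangent φ (u n) t + ε := by linarith [(hl hq).1]
    _ ≤ (⨆ n, rightTangent φ (u n) t) + ε := by
      gcongr; exact le_ciSup (hφ.bddAbove_rightTangent hu (interior_subset ht)) n

end ConvexOn

noncomputable def tangentSup (φ : ℝ → ℝ) (u : ℕ → ℝ) (n : ℕ) (t : ℝ) : ℝ :=
  partialSups (fun k => rightTangent φ (u k) t) n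

lemma convexOn_tangentSup (φ : ℝ → ℝ) (u : ℕ → ℝ) (n : ℕ) :
    ConvexOn ℝ univ (tangentSup φ u n) := by
  induction n with
  | zero =>
    rw [show tangentSup φ u 0 = rightTangent φ (u 0) from funext fun t => partialSups_zero _]
    exact convexOn_rightTangent φ (u 0)
  | succ n ih =>
    have : tangentSup φ u (n + 1) = tangentSup φ u n ⊔ rightTangent φ (u (n + 1)) :=
      funext fun t => partialSups_add_one _ _
    rw [this]
    exact ih.sup (convexOn_rightTangent _ _)

lemma rightTangent_le_tangentSup (φ : ℝ → ℝ) (u : ℕ → ℝ) (n : ℕ) (t : ℝ) :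
    rightTangent φ (u 0) t ≤ tangentSup φ u n t :=
  le_partialSups_of_le (fun k => rightTangent φ (u k) t) (Nat.zero_le n)

namespace ConvexOn

variable {S : Set ℝ} {φ : ℝ → ℝ} {u : ℕ → ℝ} {t : ℝ}

lemma tangentSup_le (hφ : ConvexOn ℝ S φ) (hu : ∀ n, u n ∈ interior S) (ht : t ∈ S) (n : ℕ) :
    tangentSup φ u n t ≤ φ t :=
  partialSups_le _ _ _ fun k _ => hφ.rightTangent_le (hu k) ht

lemma tendsto_tangentSup (hφ : ConvexOn ℝ S φ) (hu : ∀ n, u n ∈ interior S) (ht : t ∈ S) :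
    Tendsto (fun n => tangentSup φ u n t) atTop (𝓝 (⨆ n, rightTangent φ (u n) t)) := by
  have hbdd := hφ.bddAbove_rightTangent hu ht
  rw [← ciSup_partialSups_eq hbdd]
  exact tendsto_atTop_ciSup (partialSups_monotone _) (bddAbove_range_partialSups.2 hbdd)

end ConvexOn

lemma tendsto_max_zero_one_add_mul {x : ℝ} (hx : x ≤ 0) :
    Tendsto (fun n : ℕ => max 0 (1 + n * x)) atTop (𝓝 (if x = 0 then 1 else 0)) := by
  rcases hx.eq_or_lt with rfl | hx
  · simp
  rw [if_neg hx.ne]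
  obtain ⟨N, hN⟩ := exists_nat_gt (-x)⁻¹
  refine tendsto_const_nhds.congr' (eventually_atTop.2 ⟨N, fun n hn => ?_⟩)
  have hNx : 1 < N * -x := (inv_lt_iff_one_lt_mul₀ (neg_pos.2 hx)).1 hN
  have hn : (N : ℝ) ≤ n := by exact_mod_cast hn
  exact (max_eq_left (by nlinarith)).symm

lemma exists_dense_seq_Ioo {a b : ℝ} (hab : a < b) :
    ∃ u : ℕ → ℝ, (∀ n, u n ∈ Ioo a b) ∧ Ioo a b ⊆ closure (range u) := by
  have : Nonempty (Ioo a b) := (nonempty_Ioo.2 hab).to_subtype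
  obtain ⟨u, hu⟩ := TopologicalSpace.exists_dense_seq (Ioo a b)
  refine ⟨fun n => u n, fun n => (u n).2, fun x hx => ?_⟩
  rw [range_comp' Subtype.val u]
  exact image_closure_subset_closure_image continuous_subtype_val
    ⟨⟨x, hx⟩, hu.closure_range ▸ mem_univ _, rfl⟩

/-- Suprema of tangents at a dense sequence converge to `φ` inside the interval; the bumps at the
endpoints make up for upward jumps of `φ` there. -/
theorem ConvexOn.exists_tendsto_convexOn_univ {a b : ℝ} {φ : ℝ → ℝ}
    (hφ : ConvexOn ℝ (Icc a b) φ) (hab : a < b) :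
    ∃ χ : ℕ → ℝ → ℝ, (∀ n, ConvexOn ℝ univ (χ n)) ∧ (∃ C, ∀ n, ∀ t ∈ Icc a b, |χ n t| ≤ C) ∧
      ∀ t ∈ Icc a b, Tendsto (fun n => χ n t) atTop (𝓝 (φ t)) := by
  obtain ⟨u, hu, hdense⟩ := exists_dense_seq_Ioo hab
  rw [← interior_Icc] at hu hdense
  set ℓ := fun t => ⨆ n, rightTangent φ (u n) t
  have hℓ : ∀ t ∈ Icc a b, ℓ t ≤ φ t := fun t ht =>
    ciSup_le fun n => hφ.rightTangent_le (hu n) ht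
  set cb := φ b - ℓ b
  set ca := φ a - ℓ a
  have hcb : 0 ≤ cb := sub_nonneg.2 (hℓ b (right_mem_Icc.2 hab.le))
  have hca : 0 ≤ ca := sub_nonneg.2 (hℓ a (left_mem_Icc.2 hab.le))
  refine ⟨fun n t => tangentSup φ u n t + cb * max 0 (1 + n * (t - b)) +
    ca * max 0 (1 + n * (a - t)), fun n => ?_, ?_, fun t ht => ?_⟩
  · have hbump_b : ConvexOn ℝ univ fun t => max 0 (1 + n * (t - b)) :=
      (convexOn_univ_max_zero_affine (1 - n * b) n).congr fun t _ => by ring_nf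
    have hbump_a : ConvexOn ℝ univ fun t => max 0 (1 + n * (a - t)) :=
      (convexOn_univ_max_zero_affine (1 + n * a) (-n)).congr fun t _ => by ring_nf
    exact ((convexOn_tangentSup φ u n).add (hbump_b.smul hcb)).add (hbump_a.smul hca)
  · obtain ⟨C, hC⟩ := isCompact_Icc.exists_bound_of_continuousOn
      (convexOn_rightTangent φ (u 0)).locallyLipschitz.continuous.continuousOn
    refine ⟨max |-C| |max (φ a) (φ b) + cb + ca|, fun n t ht => abs_le_max_abs_abs ?_ ?_⟩
    · have h0 := (abs_le.1 (hC t ht)).1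
      have := rightTangent_le_tangentSup φ u n t
      have : 0 ≤ cb * max 0 (1 + n * (t - b)) := mul_nonneg hcb (le_max_left _ _)
      have : 0 ≤ ca * max 0 (1 + n * (a - t)) := mul_nonneg hca (le_max_left _ _)
      linarith
    · have hφt : φ t ≤ max (φ a) (φ b) := hφ.le_on_segment (left_mem_Icc.2 hab.le)
        (right_mem_Icc.2 hab.le) (by rwa [segment_eq_Icc hab.le])
      have hn : (0 : ℝ) ≤ n := n.cast_nonneg
      have : cb * max 0 (1 + n * (t - b)) ≤ cb :=
        mul_le_of_le_one_right hcb (max_le zero_le_one (by nlinarith [ht.2]))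
      have : ca * max 0 (1 + n * (a - t)) ≤ ca :=
        mul_le_of_le_one_right hca (max_le zero_le_one (by nlinarith [ht.1]))
      linarith [hφ.tangentSup_le hu ht n]
  · have hlim := ((hφ.tendsto_tangentSup hu ht).add
      ((tendsto_max_zero_one_add_mul (sub_nonpos.2 ht.2)).const_mul cb)).add
      ((tendsto_max_zero_one_add_mul (sub_nonpos.2 ht.1)).const_mul ca)
    convert hlim using 2
    rcases eq_or_lt_of_le ht.2 with rfl | htb
    · simp [sub_eq_zero, hab.ne, ℓ, cb]
    rcases eq_or_lt_of_le ht.1 with rfl | hat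
    · simp [sub_eq_zero, htb.ne, ℓ, ca]
    have hint : t ∈ interior (Icc a b) := by rw [interior_Icc]; exact ⟨hat, htb⟩
    simp [sub_eq_zero, htb.ne, hat.ne, hφ.ciSup_rightTangent hu hdense hint]

section ConvexOrder

variable {α α' : Type*} [MeasurableSpace α] [MeasurableSpace α']

/-- Since non-integrable functions have integral `0`, this is the usual convex order only when all
the integrals exist, e.g. for bounded `f` and `f'`. -/
def ConvexOrderLE (μ : Measure α) (f : α → ℝ) (μ' : Measure α') (f' : α' → ℝ) : Prop :=
  ∀ ψ : ℝ → ℝ, ConvexOn ℝ univ ψ → ∫ x, ψ (f x) ∂μ ≤ ∫ x, ψ (f' x) ∂μ'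

variable {μ : Measure α} {μ' : Measure α'}

lemma convexOn_integral {E : Type*} [AddCommGroup E] [Module ℝ E] {s : Set E} (hs : Convex ℝ s)
    {F : α → E → ℝ} (hF : ∀ x, ConvexOn ℝ s (F x))
    (hint : ∀ c ∈ s, Integrable (fun x => F x c) μ) :
    ConvexOn ℝ s fun c => ∫ x, F x c ∂μ := by
  refine ⟨hs, fun c hc d hd p q hp hq hpq => ?_⟩
  have hc' : Integrable (fun x => p • F x c) μ := (hint c hc).smul p
  have hd' : Integrable (fun x => q • F x d) μ := (hint d hd).smul q
  calc ∫ x, F x (p • c + q • d) ∂μ ≤ ∫ x, (p • F x c + q • F x d) ∂μ :=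
        integral_mono (hint _ (hs hc hd hp hq hpq)) (hc'.add hd')
          fun x => (hF x).2 hc hd hp hq hpq
    _ = p • ∫ x, F x c ∂μ + q • ∫ x, F x d ∂μ := by
        rw [integral_add hc' hd', integral_smul, integral_smul]

lemma Continuous.integrable_comp_of_mem_Icc [IsFiniteMeasure μ] {ψ : ℝ → ℝ} (hψ : Continuous ψ)
    {f : α → ℝ} (hf : AEMeasurable f μ) {a b : ℝ} (hfab : ∀ x, f x ∈ Icc a b) :
    Integrable (fun x => ψ (f x)) μ := by
  obtain ⟨C, hC⟩ := isCompact_Icc.exists_bound_of_continuousOn hψ.continuousOn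
  exact .of_bound (hψ.comp_aestronglyMeasurable hf.aestronglyMeasurable) C
    (ae_of_all _ fun x => hC _ (hfab x))

lemma Continuous.integrable_comp_sub_prod [IsFiniteMeasure μ] {ψ : ℝ → ℝ} (hψ : Continuous ψ)
    {k : α → ℝ} (hk : Measurable k) {a b : ℝ} (hkab : ∀ x, k x ∈ Icc a b) :
    Integrable (fun p : α × α => ψ (k p.1 - k p.2)) (μ.prod μ) :=
  hψ.integrable_comp_of_mem_Icc
    ((hk.comp measurable_fst).sub (hk.comp measurable_snd)).aemeasurable (a := a - b) (b := b - a)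
    fun p => ⟨by linarith [(hkab p.1).1, (hkab p.2).2], by linarith [(hkab p.1).2, (hkab p.2).1]⟩

lemma tendsto_integral_comp_of_tendsto [IsFiniteMeasure μ] {χ : ℕ → ℝ → ℝ} {φ : ℝ → ℝ}
    {s : Set ℝ} {C : ℝ} (hχ : ∀ n, Continuous (χ n)) (hC : ∀ n, ∀ t ∈ s, |χ n t| ≤ C)
    (hlim : ∀ t ∈ s, Tendsto (fun n => χ n t) atTop (𝓝 (φ t)))
    {f : α → ℝ} (hf : AEMeasurable f μ) (hfs : ∀ x, f x ∈ s) :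
    Tendsto (fun n => ∫ x, χ n (f x) ∂μ) atTop (𝓝 (∫ x, φ (f x) ∂μ)) :=
  tendsto_integral_of_dominated_convergence (fun _ => C)
    (fun n => (hχ n).comp_aestronglyMeasurable hf.aestronglyMeasurable) (integrable_const C)
    (fun n => ae_of_all _ fun x => hC n _ (hfs x)) (ae_of_all _ fun x => hlim _ (hfs x))

lemma ConvexOn.integrable_comp_of_mem_Icc [IsFiniteMeasure μ] {a b : ℝ} {φ : ℝ → ℝ}
    (hφ : ConvexOn ℝ (Icc a b) φ) (hab : a < b) {f : α → ℝ} (hf : AEMeasurable f μ)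
    (hfab : ∀ x, f x ∈ Icc a b) : Integrable (fun x => φ (f x)) μ := by
  obtain ⟨χ, hχ, ⟨C, hC⟩, hlim⟩ := hφ.exists_tendsto_convexOn_univ hab
  have hmeas : AEStronglyMeasurable (fun x => φ (f x)) μ :=
    aestronglyMeasurable_of_tendsto_ae atTop
      (fun n => (hχ n).locallyLipschitz.continuous.comp_aestronglyMeasurable
        hf.aestronglyMeasurable)
      (ae_of_all _ fun x => hlim _ (hfab x))
  refine .of_bound hmeas C (ae_of_all _ fun x => ?_)
  exact le_of_tendsto ((continuous_abs.tendsto _).comp (hlim _ (hfab x)))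
    (Eventually.of_forall fun n => hC n _ (hfab x))

variable [IsProbabilityMeasure μ] [IsProbabilityMeasure μ'] {f : α → ℝ} {f' : α' → ℝ}

theorem ConvexOrderLE.integral_comp_le_of_convexOn_Icc (h : ConvexOrderLE μ f μ' f')
    (hf : AEMeasurable f μ) (hf' : AEMeasurable f' μ') {a b : ℝ} (hab : a < b)
    (hfab : ∀ x, f x ∈ Icc a b) (hf'ab : ∀ x, f' x ∈ Icc a b) {φ : ℝ → ℝ}
    (hφ : ConvexOn ℝ (Icc a b) φ) : ∫ x, φ (f x) ∂μ ≤ ∫ x, φ (f' x) ∂μ' := by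
  obtain ⟨χ, hχ, ⟨C, hC⟩, hlim⟩ := hφ.exists_tendsto_convexOn_univ hab
  have hχc : ∀ n, Continuous (χ n) := fun n => (hχ n).locallyLipschitz.continuous
  exact le_of_tendsto_of_tendsto' (tendsto_integral_comp_of_tendsto hχc hC hlim hf hfab)
    (tendsto_integral_comp_of_tendsto hχc hC hlim hf' hf'ab) fun n => h _ (hχ n)

theorem ConvexOrderLE.sub_prod {g : α → ℝ} {g' : α' → ℝ} (h : ConvexOrderLE μ g μ' g')
    (hg : Measurable g) (hg' : Measurable g') {a b : ℝ} (hgab : ∀ x, g x ∈ Icc a b)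
    (hg'ab : ∀ x, g' x ∈ Icc a b) :
    ConvexOrderLE (μ.prod μ) (fun p => g p.1 - g p.2) (μ'.prod μ') (fun p => g' p.1 - g' p.2) := by
  intro ψ hψ
  have hψc := hψ.locallyLipschitz.continuous
  set Ψ : ℝ → ℝ := fun c => ∫ x, ψ (g' x - c) ∂μ'
  have hΨ : ConvexOn ℝ univ Ψ :=
    convexOn_integral convex_univ
      (fun x => (hψ.comp_affine_univ (g' x) (-1)).congr fun c _ => by ring_nf)
      fun c _ => hψc.integrable_comp_of_mem_Icc (hg'.sub_const c).aemeasurable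
        (a := a - c) (b := b - c) fun x => ⟨by linarith [(hg'ab x).1], by linarith [(hg'ab x).2]⟩
  calc ∫ p, ψ (g p.1 - g p.2) ∂(μ.prod μ) = ∫ y, ∫ x, ψ (g x - g y) ∂μ ∂μ :=
        integral_prod_symm _ (hψc.integrable_comp_sub_prod hg hgab)
    _ ≤ ∫ y, Ψ (g y) ∂μ :=
        integral_mono (hψc.integrable_comp_sub_prod hg hgab).integral_prod_right
          (hΨ.locallyLipschitz.continuous.integrable_comp_of_mem_Icc hg.aemeasurable hgab) fun y =>
          h (fun t => ψ (t - g y)) ((hψ.comp_affine_univ (-g y) 1).congr fun t _ => by ring_nf)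
    _ ≤ ∫ y, Ψ (g' y) ∂μ' := h Ψ hΨ
    _ = ∫ p, ψ (g' p.1 - g' p.2) ∂(μ'.prod μ') :=
        (integral_prod_symm _ (hψc.integrable_comp_sub_prod hg' hg'ab)).symm

end ConvexOrder

instance : IsProbabilityMeasure (volume.restrict (Ioo (0 : ℝ) 1)) :=
  ⟨by simp [Real.volume_Ioo]⟩

lemma bddBelow_cdf_ge (ν : Measure ℝ) {v : ℝ} (hv : 0 < v) : BddBelow {z | v ≤ cdf ν z} := by
  obtain ⟨z₀, hz₀⟩ := eventually_atBot.1 ((tendsto_cdf_atBot ν).eventually_lt_const hv)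
  exact ⟨z₀, fun z hz => le_of_not_gt fun hlt => (hz₀ z hlt.le).not_ge hz⟩

section Quantile

variable (ν : Measure ℝ) [IsProbabilityMeasure ν]

lemma cdfQuantile_eq_sInf_cdf (v : ℝ) : cdfQuantile ν v = sInf {z | v ≤ cdf ν z} := by
  simp [cdfQuantile, cdf_eq_real, measureReal_def]

lemma cdfQuantile_le_iff {v z : ℝ} (hv : v ∈ Ioo 0 1) :
    cdfQuantile ν v ≤ z ↔ v ≤ cdf ν z := by
  rw [cdfQuantile_eq_sInf_cdf]
  set S := {z | v ≤ cdf ν z}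
  have hne : S.Nonempty :=
    ((tendsto_cdf_atTop ν).eventually_const_lt hv.2).exists.imp fun _ h => h.le
  have hbdd := bddBelow_cdf_ge ν hv.1
  refine ⟨fun h => ?_, fun h => csInf_le hbdd h⟩
  -- by right-continuity, the up-set `S` contains its infimum
  have hinf : v ≤ cdf ν (sInf S) := by
    refine ge_of_tendsto (((cdf ν).right_continuous _).mono Ioi_subset_Ici_self) ?_
    filter_upwards [self_mem_nhdsWithin] with w hw
    obtain ⟨z, hz, hzw⟩ := (csInf_lt_iff hbdd hne).1 hw
    exact hz.trans (monotone_cdf ν hzw.le)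
  exact hinf.trans (monotone_cdf ν h)

lemma aemeasurable_cdfQuantile : AEMeasurable (cdfQuantile ν) (volume.restrict (Ioo 0 1)) :=
  aemeasurable_restrict_of_monotoneOn measurableSet_Ioo fun _ hu _ hv huv =>
    (cdfQuantile_le_iff ν hu).2 (huv.trans ((cdfQuantile_le_iff ν hv).1 le_rfl))

lemma map_cdfQuantile : (volume.restrict (Ioo 0 1)).map (cdfQuantile ν) = ν := by
  refine (Measure.ext_of_Iic ν _ fun z => ?_).symm
  rw [Measure.map_apply_of_aemeasurable (aemeasurable_cdfQuantile ν) measurableSet_Iic,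
    Measure.restrict_apply' measurableSet_Ioo, ← ofReal_cdf]
  have hset : cdfQuantile ν ⁻¹' Iic z ∩ Ioo 0 1 = Iic (cdf ν z) ∩ Ioo 0 1 := by
    ext v
    simp only [mem_inter_iff, mem_preimage, mem_Iic, and_congr_left_iff]
    exact cdfQuantile_le_iff ν
  rw [hset]
  have hle := cdf_le_one ν z
  refine le_antisymm ?_ ?_
  · calc ENNReal.ofReal (cdf ν z) = volume (Ioo 0 (cdf ν z)) := by simp [Real.volume_Ioo]
      _ ≤ volume (Iic (cdf ν z) ∩ Ioo 0 1) :=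
        measure_mono fun v hv => ⟨hv.2.le, hv.1, hv.2.trans_le hle⟩
  · calc volume (Iic (cdf ν z) ∩ Ioo 0 1) ≤ volume (Ioc 0 (cdf ν z)) :=
        measure_mono fun v hv => ⟨hv.2.1, hv.1⟩
      _ = ENNReal.ofReal (cdf ν z) := by simp [Real.volume_Ioc]

lemma integral_comp_cdfQuantile {F : ℝ → ℝ} (hF : AEStronglyMeasurable F ν) :
    ∫ v in Ioo 0 1, F (cdfQuantile ν v) = ∫ y, F y ∂ν := by
  conv_rhs => rw [← map_cdfQuantile ν]
  exact (integral_map (aemeasurable_cdfQuantile ν) (by rwa [map_cdfQuantile])).symm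

end Quantile

section KernelCdf

variable {α : Type*} [MeasurableSpace α] (κ : Kernel α ℝ)

def kernelCdf (x : α) (y : ℝ) : ℝ := (κ x (Iic y)).toReal

lemma measurable_kernelCdf (y : ℝ) : Measurable fun x => kernelCdf κ x y :=
  (κ.measurable_coe measurableSet_Iic).ennreal_toReal

lemma measurable_kernelCdf_uncurry [IsSFiniteKernel κ] :
    Measurable fun p : α × ℝ => kernelCdf κ p.1 p.2 :=
  (Kernel.measurable_kernel_prodMk_left (κ := κ.prodMkRight ℝ)
    (measurableSet_le measurable_snd measurable_fst.snd)).ennreal_toReal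

lemma kernelCdf_mem_Icc [IsMarkovKernel κ] (x : α) (y : ℝ) : kernelCdf κ x y ∈ Icc 0 1 :=
  ⟨ENNReal.toReal_nonneg, ENNReal.toReal_le_of_le_ofReal zero_le_one (by simp [prob_le_one])⟩

lemma kernelCdf_sub_mem_Icc [IsMarkovKernel κ] (x x' : α) (y : ℝ) :
    kernelCdf κ x y - kernelCdf κ x' y ∈ Icc (-1) 1 := by
  have h := kernelCdf_mem_Icc κ x y
  have h' := kernelCdf_mem_Icc κ x' y
  constructor <;> linarith [h.1, h.2, h'.1, h'.2]

end KernelCdf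

section Sensitivity

variable {μ ν : Measure ℝ} [IsProbabilityMeasure μ] [IsProbabilityMeasure ν]
  {κ : Kernel ℝ ℝ} [IsMarkovKernel κ] {φ : ℝ → ℝ}

lemma integrable_comp_kernelCdf_sub_cdfQuantile (hφ : ConvexOn ℝ (Icc (-1) 1) φ) :
    Integrable (fun p : (ℝ × ℝ) × ℝ =>
        φ (kernelCdf κ p.1.1 (cdfQuantile ν p.2) - kernelCdf κ p.1.2 (cdfQuantile ν p.2)))
      ((μ.prod μ).prod (volume.restrict (Ioo 0 1))) := by
  have hq : AEMeasurable (fun p : (ℝ × ℝ) × ℝ => cdfQuantile ν p.2)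
      ((μ.prod μ).prod (volume.restrict (Ioo 0 1))) := (aemeasurable_cdfQuantile ν).comp_snd
  have hF := measurable_kernelCdf_uncurry κ
  exact hφ.integrable_comp_of_mem_Icc (by norm_num)
    ((hF.comp_aemeasurable (measurable_fst.fst.aemeasurable.prodMk hq)).sub
      (hF.comp_aemeasurable (measurable_fst.snd.aemeasurable.prodMk hq)))
    fun _ => kernelCdf_sub_mem_Icc κ _ _ _

lemma integral_integral_kernelCdf_sub_eq (hφ : ConvexOn ℝ (Icc (-1) 1) φ) :
    ∫ x : ℝ × ℝ, (∫ y, φ (kernelCdf κ x.1 y - kernelCdf κ x.2 y) ∂ν) ∂(μ.prod μ) =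
      ∫ v in Ioo 0 1, ∫ x : ℝ × ℝ,
        φ (kernelCdf κ x.1 (cdfQuantile ν v) - kernelCdf κ x.2 (cdfQuantile ν v)) ∂(μ.prod μ) := by
  refine (integral_congr_ae (ae_of_all _ fun x => (integral_comp_cdfQuantile ν ?_).symm)).trans
    (integral_integral_swap (integrable_comp_kernelCdf_sub_cdfQuantile hφ))
  have hF := measurable_kernelCdf_uncurry κ
  exact (hφ.integrable_comp_of_mem_Icc (by norm_num)
    ((hF.comp measurable_prodMk_left).sub (hF.comp measurable_prodMk_left)).aemeasurable
    fun y => kernelCdf_sub_mem_Icc κ x.1 x.2 y).aestronglyMeasurable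

end Sensitivity

/-- For each level `v`, the Schur order of `(Y|X)` and `(Y'|X')` is the convex order of
`x ↦ F_{Y|X=x}(q_Y(v))` and `x' ↦ F_{Y'|X'=x'}(q_{Y'}(v))`. -/
theorem integral_integral_kernelCdf_sub_le {μ ν μ' ν' : Measure ℝ} [IsProbabilityMeasure μ]
    [IsProbabilityMeasure ν] [IsProbabilityMeasure μ'] [IsProbabilityMeasure ν']
    {κ κ' : Kernel ℝ ℝ} [IsMarkovKernel κ] [IsMarkovKernel κ']
    (hord : ∀ v ∈ Ioo (0 : ℝ) 1, ConvexOrderLE μ (fun x => kernelCdf κ x (cdfQuantile ν v))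
      μ' (fun x => kernelCdf κ' x (cdfQuantile ν' v)))
    {φ : ℝ → ℝ} (hφ : ConvexOn ℝ (Icc (-1) 1) φ) :
    ∫ x : ℝ × ℝ, (∫ y, φ (kernelCdf κ x.1 y - kernelCdf κ x.2 y) ∂ν) ∂(μ.prod μ) ≤
      ∫ x : ℝ × ℝ, (∫ y, φ (kernelCdf κ' x.1 y - kernelCdf κ' x.2 y) ∂ν') ∂(μ'.prod μ') := by
  rw [integral_integral_kernelCdf_sub_eq hφ, integral_integral_kernelCdf_sub_eq hφ]
  refine integral_mono_ae (integrable_comp_kernelCdf_sub_cdfQuantile hφ).integral_prod_right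
    (integrable_comp_kernelCdf_sub_cdfQuantile hφ).integral_prod_right
    (ae_restrict_of_forall_mem measurableSet_Ioo fun v hv => ?_)
  have hmeas : ∀ (κ₀ : Kernel ℝ ℝ) (y : ℝ),
      Measurable fun p : ℝ × ℝ => kernelCdf κ₀ p.1 y - kernelCdf κ₀ p.2 y := fun κ₀ y =>
    ((measurable_kernelCdf κ₀ y).comp measurable_fst).sub
      ((measurable_kernelCdf κ₀ y).comp measurable_snd)
  exact ((hord v hv).sub_prod (measurable_kernelCdf κ _) (measurable_kernelCdf κ' _)
      (kernelCdf_mem_Icc κ · _) (kernelCdf_mem_Icc κ' · _)).integral_comp_le_of_convexOn_Icc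
    (hmeas κ _).aemeasurable (hmeas κ' _).aemeasurable (by norm_num)
    (fun _ => kernelCdf_sub_mem_Icc κ _ _ _) (fun _ => kernelCdf_sub_mem_Icc κ' _ _ _) hφ

theorem stmt15_general {Ω : Type*} [MeasurableSpace Ω] (P : Measure Ω) [IsProbabilityMeasure P]
    {Ω' : Type*} [MeasurableSpace Ω'] (P' : Measure Ω') [IsProbabilityMeasure P']
    (X Y : Ω → ℝ) (hX : Measurable X) (hY : Measurable Y)
    (X' Y' : Ω' → ℝ) (hX' : Measurable X') (hY' : Measurable Y')
    (κ : Kernel ℝ ℝ) [IsMarkovKernel κ]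
    (κ' : Kernel ℝ ℝ) [IsMarkovKernel κ']
    (hSchur : ∀ φ₀ : ℝ → ℝ, ConvexOn ℝ Set.univ φ₀ → ∀ v ∈ Set.Ioo (0 : ℝ) 1,
      Integrable (fun x => φ₀ ((κ x (Set.Iic (cdfQuantile (P.map Y) v))).toReal))
        (P.map X) →
      Integrable (fun x => φ₀ ((κ' x (Set.Iic (cdfQuantile (P'.map Y') v))).toReal))
        (P'.map X') →
      ∫ x, φ₀ ((κ x (Set.Iic (cdfQuantile (P.map Y) v))).toReal) ∂(P.map X) ≤
        ∫ x, φ₀ ((κ' x (Set.Iic (cdfQuantile (P'.map Y') v))).toReal) ∂(P'.map X'))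
    (φ : ℝ → ℝ) (hφ : ConvexOn ℝ (Set.Icc (-1 : ℝ) 1) φ) :
    ∫ x : ℝ × ℝ, (∫ y, φ ((κ x.1 (Set.Iic y)).toReal - (κ x.2 (Set.Iic y)).toReal)
          ∂(P.map Y)) ∂((P.map X).prod (P.map X)) ≤
      ∫ x : ℝ × ℝ, (∫ y, φ ((κ' x.1 (Set.Iic y)).toReal - (κ' x.2 (Set.Iic y)).toReal)
          ∂(P'.map Y')) ∂((P'.map X').prod (P'.map X')) := by
  have := Measure.isProbabilityMeasure_map (μ := P) hX.aemeasurable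
  have := Measure.isProbabilityMeasure_map (μ := P) hY.aemeasurable
  have := Measure.isProbabilityMeasure_map (μ := P') hX'.aemeasurable
  have := Measure.isProbabilityMeasure_map (μ := P') hY'.aemeasurable
  refine integral_integral_kernelCdf_sub_le (fun v hv ψ hψ => hSchur ψ hψ v hv ?_ ?_) hφ
  · exact hψ.locallyLipschitz.continuous.integrable_comp_of_mem_Icc
      (measurable_kernelCdf κ _).aemeasurable (kernelCdf_mem_Icc κ · _)
  · exact hψ.locallyLipschitz.continuous.integrable_comp_of_mem_Icc
      (measurable_kernelCdf κ' _).aemeasurable (kernelCdf_mem_Icc κ' · _)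

/-- Monotonicity w.r.t. the Schur order: If (Y|X) is smaller than
(Y'|X') in the Schur order for conditional distributions, then the sensitivity
functional of conditional distribution functions is ordered accordingly, for
every convex φ : [-1,1] → ℝ such that the integrals exist. -/
theorem stmt15 {Ω : Type*} [MeasurableSpace Ω] (P : Measure Ω) [IsProbabilityMeasure P]
    {Ω' : Type*} [MeasurableSpace Ω'] (P' : Measure Ω') [IsProbabilityMeasure P']
    (X Y : Ω → ℝ) (hX : Measurable X) (hY : Measurable Y)
    (X' Y' : Ω' → ℝ) (hX' : Measurable X') (hY' : Measurable Y')
    (hYcont : Continuous fun z => ((P.map Y) (Set.Iic z)).toReal)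
    (hY'cont : Continuous fun z => ((P'.map Y') (Set.Iic z)).toReal)
    (κ : Kernel ℝ ℝ) [IsMarkovKernel κ]
    (hκ : ∀ A B : Set ℝ, MeasurableSet A → MeasurableSet B →
      P.map (fun ω => (X ω, Y ω)) (A ×ˢ B) = ∫⁻ x in A, κ x B ∂(P.map X))
    (κ' : Kernel ℝ ℝ) [IsMarkovKernel κ']
    (hκ' : ∀ A B : Set ℝ, MeasurableSet A → MeasurableSet B →
      P'.map (fun ω => (X' ω, Y' ω)) (A ×ˢ B) = ∫⁻ x in A, κ' x B ∂(P'.map X'))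
    (hSchur : ∀ φ₀ : ℝ → ℝ, ConvexOn ℝ Set.univ φ₀ → ∀ v ∈ Set.Ioo (0 : ℝ) 1,
      Integrable (fun x => φ₀ ((κ x (Set.Iic (cdfQuantile (P.map Y) v))).toReal))
        (P.map X) →
      Integrable (fun x => φ₀ ((κ' x (Set.Iic (cdfQuantile (P'.map Y') v))).toReal))
        (P'.map X') →
      ∫ x, φ₀ ((κ x (Set.Iic (cdfQuantile (P.map Y) v))).toReal) ∂(P.map X) ≤
        ∫ x, φ₀ ((κ' x (Set.Iic (cdfQuantile (P'.map Y') v))).toReal) ∂(P'.map X'))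
    (φ : ℝ → ℝ) (hφ : ConvexOn ℝ (Set.Icc (-1 : ℝ) 1) φ)
    (hint : Integrable (fun x : ℝ × ℝ =>
        ∫ y, φ ((κ x.1 (Set.Iic y)).toReal - (κ x.2 (Set.Iic y)).toReal) ∂(P.map Y))
      ((P.map X).prod (P.map X)))
    (hint' : Integrable (fun x : ℝ × ℝ =>
        ∫ y, φ ((κ' x.1 (Set.Iic y)).toReal - (κ' x.2 (Set.Iic y)).toReal) ∂(P'.map Y'))
      ((P'.map X').prod (P'.map X'))) :
    ∫ x : ℝ × ℝ, (∫ y, φ ((κ x.1 (Set.Iic y)).toReal - (κ x.2 (Set.Iic y)).toReal)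
          ∂(P.map Y)) ∂((P.map X).prod (P.map X)) ≤
      ∫ x : ℝ × ℝ, (∫ y, φ ((κ' x.1 (Set.Iic y)).toReal - (κ' x.2 (Set.Iic y)).toReal)
          ∂(P'.map Y')) ∂((P'.map X').prod (P'.map X')) :=
  stmt15_general P P' X Y hX hY X' Y' hX' hY' κ κ' hSchur φ hφ
end

section
/- Let (K_n)_{n∈ℕ} and K be Markov kernels from [0,1] to [0,1] (each K_n(u,·) and K(u,·) a Borel probability measure on [0,1] for every u), and suppose there is a Borel set Γ ⊆ [0,1] with Lebesgue measure λ(Γ) = 1 such that for every u ∈ Γ the measures K_n(u,·) converge weakly to K(u,·) as n → ∞. Then for every continuous function φ : [−1,1] → ℝ, lim_{n→∞} ∫_{[0,1]³} φ(K_n(u₁,[0,v]) − K_n(u₂,[0,v])) dλ³(u₁,u₂,v) = ∫_{[0,1]³} φ(K(u₁,[0,v]) − K(u₂,[0,v])) dλ³(u₁,u₂,v). -/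
/-!
Fix u₁, u₂ in the conull set where `Kn n u → K u` weakly. The measures `K u₁`, `K u₂` have only
countably many atoms, so for Lebesgue-a.e. `v` the portmanteau theorem applies to `Iic v`, whose
frontier is `{v}`; as all kernels live on `[0,1]`, `Iic v` and `Icc 0 v` have the same mass. Hence
the integrand converges λ³-a.e. After replacing `φ` by a bounded continuous extension of
`φ|[-1,1]`, bounded convergence in each of the three iterated integrals gives the limit.
-/

open MeasureTheory ProbabilityTheory Filter Set
open scoped ENNReal Topology BoundedContinuousFunction

theorem measure_Iio_eq_zero_of_measure_Icc_eq_one {α : Type*} [LinearOrder α]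
    [TopologicalSpace α] [OrderClosedTopology α] [MeasurableSpace α] [OpensMeasurableSpace α]
    {μ : Measure α} [IsProbabilityMeasure μ] {a b : α} (h : μ (Icc a b) = 1) :
    μ (Iio a) = 0 :=
  measure_mono_null (show Iio a ⊆ (Icc a b)ᶜ from fun _ hx hx' => not_le.2 hx hx'.1)
    ((prob_compl_eq_zero_iff measurableSet_Icc).2 h)

theorem measure_Icc_eq_measure_Iic {α : Type*} [LinearOrder α] [MeasurableSpace α]
    {μ : Measure α} {a b : α} (hμ : μ (Iio a) = 0) (hab : a ≤ b) :
    μ (Icc a b) = μ (Iic b) := by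
  rw [← Iio_union_Icc_eq_Iic hab]
  exact (measure_congr (union_ae_eq_right_of_ae_eq_empty (ae_eq_empty.2 hμ))).symm

theorem ae_restrict_mem_of_subset_of_measure_ge {α : Type*} [MeasurableSpace α]
    {μ : Measure α} {s t : Set α} (hts : t ⊆ s) (hst : μ s ≤ μ t)
    (ht : NullMeasurableSet t μ) (hs : μ s ≠ ∞) : ∀ᵐ x ∂μ.restrict s, x ∈ t := by
  rw [← Measure.restrict_congr_set (ae_eq_of_subset_of_measure_ge hts hst ht hs)]
  exact ae_restrict_mem₀ ht

theorem ae_measure_singleton_eq_zero {α : Type*} [MeasurableSpace α]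
    [MeasurableSingletonClass α] (μ ν : Measure α) [SFinite μ] [NullSingletonClass ν] :
    ∀ᵐ x ∂ν, μ {x} = 0 := by
  have hatoms := Measure.countable_meas_level_set_pos (μ := μ) measurable_id
  filter_upwards [hatoms.ae_notMem ν] with x hx
  simpa using hx

theorem exists_boundedContinuousFunction_eqOn_Icc {α β : Type*} [LinearOrder α]
    [TopologicalSpace α] [OrderTopology α] [CompactIccSpace α] [PseudoMetricSpace β]
    {a b : α} (hab : a ≤ b) {φ : α → β} (hφ : ContinuousOn φ (Icc a b)) :
    ∃ ψ : α →ᵇ β, EqOn ψ φ (Icc a b) :=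
  ⟨(BoundedContinuousFunction.mkOfCompact ⟨(Icc a b).domRestrict φ, hφ.domRestrict⟩)
      |>.compContinuous ⟨projIcc a b hab, continuous_projIcc⟩,
    fun x hx => show φ (projIcc a b hab x) = φ x by rw [projIcc_of_mem hab hx]⟩

theorem tendsto_measure_of_tendsto_integral_of_null_frontier {Ω ι : Type*} {L : Filter ι}
    [MeasurableSpace Ω] [TopologicalSpace Ω] [OpensMeasurableSpace Ω] [HasOuterApproxClosed Ω]
    {μs : ι → Measure Ω} {μ : Measure Ω} [∀ i, IsProbabilityMeasure (μs i)]
    [IsProbabilityMeasure μ]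
    (h : ∀ f : Ω →ᵇ ℝ, Tendsto (fun i => ∫ x, f x ∂μs i) L (𝓝 (∫ x, f x ∂μ)))
    {E : Set Ω} (hE : μ (frontier E) = 0) :
    Tendsto (fun i => μs i E) L (𝓝 (μ E)) :=
  ProbabilityMeasure.tendsto_measure_of_null_frontier_of_tendsto'
    (μs := fun i => ⟨μs i, inferInstance⟩) (μ := ⟨μ, inferInstance⟩)
    (ProbabilityMeasure.tendsto_iff_forall_integral_tendsto.2 h) hE

theorem tendsto_measure_Icc_of_tendsto_integral {ι : Type*} {L : Filter ι}
    {μs : ι → Measure ℝ} {μ : Measure ℝ} [∀ i, IsProbabilityMeasure (μs i)]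
    [IsProbabilityMeasure μ]
    (h : ∀ f : ℝ →ᵇ ℝ, Tendsto (fun i => ∫ x, f x ∂μs i) L (𝓝 (∫ x, f x ∂μ)))
    {a b : ℝ} (hμs : ∀ i, μs i (Iio a) = 0) (hμ : μ (Iio a) = 0) (hab : a ≤ b)
    (hb : μ {b} = 0) :
    Tendsto (fun i => μs i (Icc a b)) L (𝓝 (μ (Icc a b))) := by
  simp only [measure_Icc_eq_measure_Iic (hμs _) hab, measure_Icc_eq_measure_Iic hμ hab]
  exact tendsto_measure_of_tendsto_integral_of_null_frontier h (by rwa [frontier_Iic])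

theorem tendsto_integral_integral_integral_of_norm_le_const
    {α β γ E : Type*} [MeasurableSpace α] [MeasurableSpace β] [MeasurableSpace γ]
    [NormedAddCommGroup E] [NormedSpace ℝ E] {μ : Measure α} {ν : Measure β} {ρ : Measure γ}
    [IsFiniteMeasure μ] [IsFiniteMeasure ν] [IsFiniteMeasure ρ]
    {F : ℕ → α → β → γ → E} {f : α → β → γ → E} {C : ℝ}
    (hF : ∀ n, StronglyMeasurable (fun p : (α × β) × γ => F n p.1.1 p.1.2 p.2))
    (hC : ∀ n a b c, ‖F n a b c‖ ≤ C)
    (hlim : ∀ᵐ a ∂μ, ∀ᵐ b ∂ν, ∀ᵐ c ∂ρ,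
      Tendsto (fun n => F n a b c) atTop (𝓝 (f a b c))) :
    Tendsto (fun n => ∫ a, ∫ b, ∫ c, F n a b c ∂ρ ∂ν ∂μ) atTop
      (𝓝 (∫ a, ∫ b, ∫ c, f a b c ∂ρ ∂ν ∂μ)) := by
  have hC₂ : ∀ n a b, ‖∫ c, F n a b c ∂ρ‖ ≤ C * ρ.real univ := fun n a b =>
    norm_integral_le_of_norm_le_const (ae_of_all _ (hC n a b))
  have hC₁ : ∀ n a, ‖∫ b, ∫ c, F n a b c ∂ρ ∂ν‖ ≤ C * ρ.real univ * ν.real univ :=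
    fun n a => norm_integral_le_of_norm_le_const (ae_of_all _ (hC₂ n a))
  have hF₂ : ∀ n, StronglyMeasurable (fun p : α × β => ∫ c, F n p.1 p.2 c ∂ρ) :=
    fun n => (hF n).integral_prod_right'
  have hF₁ : ∀ n, StronglyMeasurable (fun a => ∫ b, ∫ c, F n a b c ∂ρ ∂ν) :=
    fun n => (hF₂ n).integral_prod_right'
  refine tendsto_integral_filter_of_norm_le_const
    (Eventually.of_forall fun n => (hF₁ n).aestronglyMeasurable)
    ⟨_, Eventually.of_forall fun n => ae_of_all _ (hC₁ n)⟩ ?_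
  filter_upwards [hlim] with a ha
  refine tendsto_integral_filter_of_norm_le_const
    (Eventually.of_forall fun n =>
      ((hF₂ n).comp_measurable measurable_prodMk_left).aestronglyMeasurable)
    ⟨_, Eventually.of_forall fun n => ae_of_all _ (hC₂ n a)⟩ ?_
  filter_upwards [ha] with b hb
  exact tendsto_integral_filter_of_norm_le_const
    (Eventually.of_forall fun n => ((hF n).comp_measurable
      (measurable_prodMk_left (x := (a, b)))).aestronglyMeasurable)
    ⟨_, Eventually.of_forall fun n => ae_of_all _ (hC n a b)⟩ hb

theorem measurable_kernel_Icc {α : Type*} [MeasurableSpace α] (κ : Kernel α ℝ)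
    [IsSFiniteKernel κ] (a : ℝ) : Measurable (fun p : α × ℝ => κ p.1 (Icc a p.2)) := by
  have ht : MeasurableSet {q : (α × ℝ) × ℝ | q.2 ∈ Icc a q.1.2} :=
    (measurableSet_le measurable_const measurable_snd).inter
      (measurableSet_le measurable_snd measurable_fst.snd)
  exact Kernel.measurable_kernel_prodMk_left (κ := κ.prodMkRight ℝ) ht

def cdfGap (κ : Kernel ℝ ℝ) (u₁ u₂ v : ℝ) : ℝ :=
  (κ u₁ (Icc 0 v)).toReal - (κ u₂ (Icc 0 v)).toReal

theorem cdfGap_mem_Icc (κ : Kernel ℝ ℝ) [IsMarkovKernel κ] (u₁ u₂ v : ℝ) :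
    cdfGap κ u₁ u₂ v ∈ Icc (-1) 1 := by
  have hmem : ∀ u, (κ u (Icc 0 v)).toReal ∈ Icc (0 : ℝ) 1 :=
    fun u => ⟨ENNReal.toReal_nonneg, measureReal_le_one⟩
  obtain ⟨h₁, h₁'⟩ := hmem u₁
  obtain ⟨h₂, h₂'⟩ := hmem u₂
  exact ⟨by unfold cdfGap; linarith, by unfold cdfGap; linarith⟩

theorem measurable_cdfGap (κ : Kernel ℝ ℝ) [IsSFiniteKernel κ] :
    Measurable (fun p : (ℝ × ℝ) × ℝ => cdfGap κ p.1.1 p.1.2 p.2) :=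
  ((measurable_kernel_Icc κ 0).comp (measurable_fst.fst.prodMk measurable_snd)).ennreal_toReal.sub
    ((measurable_kernel_Icc κ 0).comp (measurable_fst.snd.prodMk measurable_snd)).ennreal_toReal

theorem ae_tendsto_cdfGap {Kn : ℕ → Kernel ℝ ℝ} {K : Kernel ℝ ℝ} [∀ n, IsMarkovKernel (Kn n)]
    [IsMarkovKernel K] (hKn : ∀ n u, Kn n u (Iio 0) = 0) (hK : ∀ u, K u (Iio 0) = 0)
    {u₁ u₂ : ℝ}
    (h₁ : ∀ f : ℝ →ᵇ ℝ, Tendsto (fun n => ∫ x, f x ∂(Kn n u₁)) atTop (𝓝 (∫ x, f x ∂(K u₁))))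
    (h₂ : ∀ f : ℝ →ᵇ ℝ, Tendsto (fun n => ∫ x, f x ∂(Kn n u₂)) atTop (𝓝 (∫ x, f x ∂(K u₂)))) :
    ∀ᵐ v ∂volume.restrict (Icc 0 1),
      Tendsto (fun n => cdfGap (Kn n) u₁ u₂ v) atTop (𝓝 (cdfGap K u₁ u₂ v)) := by
  filter_upwards [ae_restrict_mem measurableSet_Icc,
    ae_restrict_of_ae (ae_measure_singleton_eq_zero (K u₁) volume),
    ae_restrict_of_ae (ae_measure_singleton_eq_zero (K u₂) volume)] with v hv hv₁ hv₂
  have hcdf : ∀ u, K u {v} = 0 →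
      (∀ f : ℝ →ᵇ ℝ, Tendsto (fun n => ∫ x, f x ∂(Kn n u)) atTop (𝓝 (∫ x, f x ∂(K u)))) →
      Tendsto (fun n => (Kn n u (Icc 0 v)).toReal) atTop (𝓝 (K u (Icc 0 v)).toReal) :=
    fun u hvu hu => (ENNReal.tendsto_toReal (measure_ne_top _ _)).comp
      (tendsto_measure_Icc_of_tendsto_integral hu (fun n => hKn n u) (hK u) hv.1 hvu)
  exact (hcdf u₁ hv₁ h₁).sub (hcdf u₂ hv₂ h₂)

theorem tendsto_integral_comp_cdfGap (Kn : ℕ → Kernel ℝ ℝ) (K : Kernel ℝ ℝ)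
    [∀ n, IsMarkovKernel (Kn n)] [IsMarkovKernel K]
    (hKn : ∀ n u, Kn n u (Iio 0) = 0) (hK : ∀ u, K u (Iio 0) = 0)
    (hconv : ∀ᵐ u ∂volume.restrict (Icc (0 : ℝ) 1), ∀ f : ℝ →ᵇ ℝ,
      Tendsto (fun n => ∫ x, f x ∂(Kn n u)) atTop (𝓝 (∫ x, f x ∂(K u))))
    (ψ : ℝ →ᵇ ℝ) :
    Tendsto (fun n => ∫ u₁ in Icc (0 : ℝ) 1, ∫ u₂ in Icc (0 : ℝ) 1, ∫ v in Icc (0 : ℝ) 1,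
        ψ (cdfGap (Kn n) u₁ u₂ v)) atTop
      (𝓝 (∫ u₁ in Icc (0 : ℝ) 1, ∫ u₂ in Icc (0 : ℝ) 1, ∫ v in Icc (0 : ℝ) 1,
        ψ (cdfGap K u₁ u₂ v))) := by
  refine tendsto_integral_integral_integral_of_norm_le_const
    (fun n => (ψ.continuous.measurable.comp (measurable_cdfGap (Kn n))).stronglyMeasurable)
    (fun n _ _ _ => ψ.norm_coe_le_norm _) ?_
  filter_upwards [hconv] with u₁ h₁
  filter_upwards [hconv] with u₂ h₂
  filter_upwards [ae_tendsto_cdfGap hKn hK h₁ h₂] with v hv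
  exact (ψ.continuous.tendsto _).comp hv

/-- Continuity: If Markov kernels `Kn` from [0,1] to [0,1] converge
weakly conditional to a Markov kernel `K` (i.e. `Kn n u → K u` weakly for Lebesgue
almost every u in [0,1]), then for every continuous φ : [-1,1] → ℝ the associated
triple integrals converge. -/
theorem stmt16 (Kn : ℕ → Kernel ℝ ℝ) (K : Kernel ℝ ℝ)
    [∀ n, IsMarkovKernel (Kn n)] [IsMarkovKernel K]
    (hKn01 : ∀ n, ∀ u : ℝ, (Kn n) u (Set.Icc (0 : ℝ) 1) = 1)
    (hK01 : ∀ u : ℝ, K u (Set.Icc (0 : ℝ) 1) = 1)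
    (Γ : Set ℝ) (hΓmeas : MeasurableSet Γ) (hΓsub : Γ ⊆ Set.Icc (0 : ℝ) 1)
    (hΓfull : MeasureTheory.volume Γ = 1)
    (hwcc : ∀ u ∈ Γ, ∀ f : BoundedContinuousFunction ℝ ℝ,
      Filter.Tendsto (fun n => ∫ x, f x ∂((Kn n) u)) Filter.atTop
        (nhds (∫ x, f x ∂(K u))))
    (φ : ℝ → ℝ) (hφ : ContinuousOn φ (Set.Icc (-1 : ℝ) 1)) :
    Filter.Tendsto
      (fun n => ∫ u₁ in Set.Icc (0 : ℝ) 1, ∫ u₂ in Set.Icc (0 : ℝ) 1,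
        ∫ v in Set.Icc (0 : ℝ) 1,
          φ (((Kn n) u₁ (Set.Icc 0 v)).toReal - ((Kn n) u₂ (Set.Icc 0 v)).toReal))
      Filter.atTop
      (nhds (∫ u₁ in Set.Icc (0 : ℝ) 1, ∫ u₂ in Set.Icc (0 : ℝ) 1,
        ∫ v in Set.Icc (0 : ℝ) 1,
          φ ((K u₁ (Set.Icc 0 v)).toReal - (K u₂ (Set.Icc 0 v)).toReal))) := by
  have hΓae : ∀ᵐ u ∂volume.restrict (Icc (0 : ℝ) 1), u ∈ Γ :=
    ae_restrict_mem_of_subset_of_measure_ge hΓsub (by simp [hΓfull])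
      hΓmeas.nullMeasurableSet (by simp)
  obtain ⟨ψ, hψ⟩ := exists_boundedContinuousFunction_eqOn_Icc (by norm_num) hφ
  have hψφ : ∀ (κ : Kernel ℝ ℝ) [IsMarkovKernel κ] (u₁ u₂ v : ℝ),
      ψ (cdfGap κ u₁ u₂ v) = φ (cdfGap κ u₁ u₂ v) :=
    fun κ _ u₁ u₂ v => hψ (cdfGap_mem_Icc κ u₁ u₂ v)
  have hlim := tendsto_integral_comp_cdfGap Kn K
    (fun n u => measure_Iio_eq_zero_of_measure_Icc_eq_one (hKn01 n u))
    (fun u => measure_Iio_eq_zero_of_measure_Icc_eq_one (hK01 u)) (hΓae.mono hwcc) ψ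
  simp only [hψφ] at hlim
  simpa only [cdfGap] using hlim
end

section
/- Let (Ω, 𝒜, P) be a probability space and X, Y : Ω → ℝ random variables. Then ∫_{ℝ×ℝ} ∫_ℝ (F_{Y|X=x₁}(y) − F_{Y|X=x₂}(y))² dP^Y(y) d(P^X ⊗ P^X)(x₁,x₂) = 2 ∫_ℝ Var(E[𝟙_{\{Y ≤ y\}} | σ(X)]) dP^Y(y), and ∫_{ℝ×ℝ} ∫_ℝ (𝟙_{\{y₁ ≤ y\}} − 𝟙_{\{y₂ ≤ y\}})² dP^Y(y) d(P^Y ⊗ P^Y)(y₁,y₂) = 2 ∫_ℝ Var(𝟙_{\{Y ≤ y\}}) dP^Y(y). Consequently the dependence measure Λ_φ with φ(x) = x² equals Chatterjee's coefficient ∫_ℝ Var(E[𝟙_{\{Y ≤ y\}}|σ(X)]) dP^Y(y) / ∫_ℝ Var(𝟙_{\{Y ≤ y\}}) dP^Y(y). -/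
open MeasureTheory ProbabilityTheory Filter Set
open scoped ENNReal Topology

/-!
For `g` in `L²(μ)`, expanding the square shows `∫∫ (g x₁ - g x₂)² d(μ ⊗ μ) = 2 Var_μ[g]`: the
cross term integrates to `(∫ g dμ)²`. After Fubini, this is applied for each `y` to
`g = κ(·, (-∞, y])` under `P^X` and to `g = 𝟙{· ≤ y}` under `P^Y`. In the first case one still
needs `Var[E[𝟙{Y ≤ y} | σ(X)]] = Var_{P^X}[κ(·, (-∞, y])]`: the rectangle identity says that
`P^{(X,Y)} = P^X ⊗ κ`, so `κ` agrees `P^X`-a.e. with the conditional distribution of `Y` given `X`,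
and evaluated at `X` the latter is a version of `E[𝟙{Y ≤ y} | σ(X)]`.
-/

namespace ProbabilityTheory

variable {α β Ω : Type*} [MeasurableSpace α] [MeasurableSpace β] [MeasurableSpace Ω]

lemma integral_prod_sub_sq_eq_two_mul_variance {μ : Measure α} [IsProbabilityMeasure μ]
    {g : α → ℝ} (hg : MemLp g 2 μ) :
    ∫ p : α × α, (g p.1 - g p.2) ^ 2 ∂(μ.prod μ) = 2 * Var[g; μ] := by
  have hsq := hg.integrable_sq
  have hg1 := hg.integrable one_le_two
  calc ∫ p : α × α, (g p.1 - g p.2) ^ 2 ∂(μ.prod μ)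
      = ∫ p : α × α, (g p.1 ^ 2 + g p.2 ^ 2 - 2 * (g p.1 * g p.2)) ∂(μ.prod μ) := by
        congr 1 with p; ring
    _ = 2 * (∫ x, g x ^ 2 ∂μ - (∫ x, g x ∂μ) ^ 2) := by
        rw [integral_sub (f := fun p : α × α => g p.1 ^ 2 + g p.2 ^ 2)
            ((hsq.comp_fst μ).add (hsq.comp_snd μ)) ((hg1.mul_prod hg1).const_mul 2),
          integral_add (hsq.comp_fst μ) (hsq.comp_snd μ), integral_const_mul,
          integral_fun_fst (fun x => g x ^ 2), integral_fun_snd (fun x => g x ^ 2),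
          integral_prod_mul]
        simp only [probReal_univ, one_smul]
        ring
    _ = 2 * Var[g; μ] := by rw [variance_eq_sub hg]; rfl

lemma integral_integral_sub_sq_eq_two_mul_integral_variance {μ : Measure α} {ν : Measure β}
    [IsProbabilityMeasure μ] [IsFiniteMeasure ν] {F : α → β → ℝ}
    (hF : Measurable (Function.uncurry F)) {C : ℝ} (hC : ∀ x y, ‖F x y‖ ≤ C) :
    ∫ p : α × α, ∫ y, (F p.1 y - F p.2 y) ^ 2 ∂ν ∂(μ.prod μ) =
      2 * ∫ y, Var[fun x => F x y; μ] ∂ν := by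
  have hint : Integrable (Function.uncurry fun (p : α × α) y => (F p.1 y - F p.2 y) ^ 2)
      ((μ.prod μ).prod ν) := by
    refine Integrable.of_bound ?_ ((C + C) ^ 2) (ae_of_all _ fun q => ?_)
    · exact (((hF.comp (measurable_fst.fst.prodMk measurable_snd)).sub
        (hF.comp (measurable_fst.snd.prodMk measurable_snd))).pow_const 2).aestronglyMeasurable
    · rw [Function.uncurry_apply_pair, norm_pow]
      exact pow_le_pow_left₀ (norm_nonneg _)
        ((norm_sub_le _ _).trans (add_le_add (hC _ _) (hC _ _))) 2
  rw [integral_integral_swap hint, ← integral_const_mul]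
  congr 2 with y
  exact integral_prod_sub_sq_eq_two_mul_variance
    (MemLp.of_bound (hF.comp measurable_prodMk_right).aestronglyMeasurable C
      (ae_of_all _ fun x => hC x y))

lemma measurable_kernel_Iic (κ : Kernel α ℝ) [IsSFiniteKernel κ] :
    Measurable fun p : α × ℝ => κ p.1 (Iic p.2) :=
  Kernel.measurable_kernel_prodMk_left (κ := κ.prodMkRight ℝ)
    (measurableSet_le measurable_snd measurable_fst.snd)

lemma map_prodMk_eq_compProd_of_apply_prod {P : Measure Ω} [IsFiniteMeasure P]
    {X : Ω → α} {Y : Ω → β} {κ : Kernel α β} [IsSFiniteKernel κ]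
    (hκ : ∀ (A : Set α) (B : Set β), MeasurableSet A → MeasurableSet B →
      P.map (fun ω => (X ω, Y ω)) (A ×ˢ B) = ∫⁻ x in A, κ x B ∂(P.map X)) :
    P.map (fun ω => (X ω, Y ω)) = P.map X ⊗ₘ κ :=
  Measure.ext_prod fun hA hB => by rw [Measure.compProd_apply_prod hA hB, hκ _ _ hA hB]

lemma variance_condExp_indicator_eq_variance_kernel [StandardBorelSpace β] [Nonempty β]
    {P : Measure Ω} [IsFiniteMeasure P] {X : Ω → α} {Y : Ω → β} (hX : Measurable X)
    (hY : Measurable Y) {κ : Kernel α β} [IsFiniteKernel κ]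
    (hκ : P.map (fun ω => (X ω, Y ω)) = P.map X ⊗ₘ κ) {B : Set β} (hB : MeasurableSet B) :
    Var[P⟦Y ⁻¹' B | MeasurableSpace.comap X ‹_›⟧; P] = Var[fun x => (κ x).real B; P.map X] := by
  have hκX : ∀ᵐ ω ∂P, condDistrib Y X P (X ω) = κ (X ω) :=
    ae_of_ae_map hX.aemeasurable (condDistrib_ae_eq_of_measure_eq_compProd_of_measurable hX hY hκ)
  have hcond : (fun ω => (κ (X ω)).real B) =ᵐ[P] P⟦Y ⁻¹' B | MeasurableSpace.comap X ‹_›⟧ := by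
    refine EventuallyEq.trans ?_ (condDistrib_ae_eq_condExp hX hY hB)
    filter_upwards [hκX] with ω h
    rw [h]
  rw [← variance_congr hcond, variance_map (X := fun x => (κ x).real B)
    (κ.measurable_coe hB).ennreal_toReal.aemeasurable hX.aemeasurable]
  rfl

end ProbabilityTheory

/-- For φ(x) = x², the numerator and the normalizing constant of the
sensitivity dependence measure are twice the integrated variance of the
conditional resp. unconditional indicator, so Λ_{x²} equals Chatterjee's
coefficient. -/
theorem stmt18 {Ω : Type*} [MeasurableSpace Ω] (P : Measure Ω) [IsProbabilityMeasure P]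
    (X Y : Ω → ℝ) (hX : Measurable X) (hY : Measurable Y)
    (κ : Kernel ℝ ℝ) [IsMarkovKernel κ]
    (hκ : ∀ A B : Set ℝ, MeasurableSet A → MeasurableSet B →
      P.map (fun ω => (X ω, Y ω)) (A ×ˢ B) = ∫⁻ x in A, κ x B ∂(P.map X)) :
    (∫ x : ℝ × ℝ, (∫ y, ((κ x.1 (Set.Iic y)).toReal - (κ x.2 (Set.Iic y)).toReal) ^ 2
            ∂(P.map Y)) ∂((P.map X).prod (P.map X)) =
        2 * ∫ y, variance
            (P[fun ω => if Y ω ≤ y then (1 : ℝ) else 0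
                | MeasurableSpace.comap X Real.measurableSpace]) P ∂(P.map Y)) ∧
    (∫ p : ℝ × ℝ, (∫ y, ((if p.1 ≤ y then (1 : ℝ) else 0) - (if p.2 ≤ y then (1 : ℝ) else 0)) ^ 2
            ∂(P.map Y)) ∂((P.map Y).prod (P.map Y)) =
        2 * ∫ y, variance (fun ω => if Y ω ≤ y then (1 : ℝ) else 0) P ∂(P.map Y)) ∧
    (∫ x : ℝ × ℝ, (∫ y, ((κ x.1 (Set.Iic y)).toReal - (κ x.2 (Set.Iic y)).toReal) ^ 2
            ∂(P.map Y)) ∂((P.map X).prod (P.map X))) /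
        (∫ p : ℝ × ℝ, (∫ y, ((if p.1 ≤ y then (1 : ℝ) else 0) - (if p.2 ≤ y then (1 : ℝ) else 0)) ^ 2
            ∂(P.map Y)) ∂((P.map Y).prod (P.map Y))) =
      (∫ y, variance
          (P[fun ω => if Y ω ≤ y then (1 : ℝ) else 0
              | MeasurableSpace.comap X Real.measurableSpace]) P ∂(P.map Y)) /
        (∫ y, variance (fun ω => if Y ω ≤ y then (1 : ℝ) else 0) P ∂(P.map Y)) := by
  have : IsProbabilityMeasure (P.map X) := Measure.isProbabilityMeasure_map hX.aemeasurable
  have : IsProbabilityMeasure (P.map Y) := Measure.isProbabilityMeasure_map hY.aemeasurable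
  have halve (a b c d : ℝ) (ha : a = 2 * c) (hb : b = 2 * d) :
      a = 2 * c ∧ b = 2 * d ∧ a / b = c / d :=
    ⟨ha, hb, by rw [ha, hb, mul_div_mul_left _ _ two_ne_zero]⟩
  refine halve _ _ _ _ ?_ ?_
  · rw [integral_integral_sub_sq_eq_two_mul_integral_variance
      (F := fun x y => (κ x (Iic y)).toReal) (measurable_kernel_Iic κ).ennreal_toReal (C := 1)
      fun x y => by rw [Real.norm_of_nonneg ENNReal.toReal_nonneg]; exact measureReal_le_one]
    congr 2 with y
    exact (variance_condExp_indicator_eq_variance_kernel hX hY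
      (map_prodMk_eq_compProd_of_apply_prod hκ) measurableSet_Iic).symm
  · rw [integral_integral_sub_sq_eq_two_mul_integral_variance
      (F := fun x y => if x ≤ y then (1 : ℝ) else 0)
      (measurable_const.ite (measurableSet_le measurable_fst measurable_snd) measurable_const)
      (C := 1) fun x y => by split_ifs <;> simp]
    congr 2 with y
    rw [variance_map (measurable_const.ite measurableSet_Iic measurable_const).aemeasurable
      hY.aemeasurable]
    rfl
end
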